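/- arXiv:1706.00064 — 4 statements merged into one kernel-verified Lean document; each statement's English description precedes it below -/
import Mathlib

section
/- The function u_c(ξ) = c·sech²(√c·ξ) with c > 0 satisfies the stationary KdV equation -u'' + 4c·u - 6u² = 0 on ℝ. -/
open Real

/-!
Differentiating twice and eliminating `sinh² = cosh² - 1` gives `(sech²)'' = 4 sech² - 6 sech⁴`.
The amplitude `c` and the rescaling `ξ ↦ √c ξ` multiply second derivatives by `c (√c)² = c²`,
which turns this identity for `sech²` into `u'' = 4c u - 6u²` for `u = c sech²(√c ·)`.
-/

lemma deriv_deriv_const_mul_comp_mul_left {𝕜 : Type*} [NontriviallyNormedField 𝕜] (f : 𝕜 → 𝕜)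
    (a s x : 𝕜) :
    deriv (deriv fun y => a * f (s * y)) x = a * s ^ 2 * deriv (deriv f) (s * x) := by
  have hderiv : deriv (fun y => a * f (s * y)) = fun y => a * (s * deriv f (s * y)) := by
    rw [deriv_const_mul_field']
    funext y
    rw [deriv_comp_mul_left, smul_eq_mul]
  rw [hderiv, deriv_const_mul_field', deriv_const_mul_field']
  beta_reduce
  rw [deriv_comp_mul_left, smul_eq_mul]
  ring

lemma hasDerivAt_sech_sq (x : ℝ) :
    HasDerivAt (fun y => (1 / cosh y) ^ 2) (-2 * sinh x / cosh x ^ 3) x := by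
  have hcosh : cosh x ≠ 0 := (cosh_pos x).ne'
  simp only [one_div]
  refine (((hasDerivAt_cosh x).inv hcosh).fun_pow 2).congr_deriv ?_
  simp only [Pi.inv_apply, Nat.cast_ofNat, Nat.add_one_sub_one, pow_one]
  field_simp

lemma deriv_sech_sq : deriv (fun y => (1 / cosh y) ^ 2) = fun x => -2 * sinh x / cosh x ^ 3 :=
  funext fun x => (hasDerivAt_sech_sq x).deriv

lemma hasDerivAt_sinh_div_cosh_pow_three (x : ℝ) :
    HasDerivAt (fun y => sinh y / cosh y ^ 3) ((cosh x ^ 2 - 3 * sinh x ^ 2) / cosh x ^ 4) x := by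
  have hcosh : cosh x ≠ 0 := (cosh_pos x).ne'
  refine ((hasDerivAt_sinh x).div ((hasDerivAt_cosh x).fun_pow 3)
    (pow_ne_zero 3 hcosh)).congr_deriv ?_
  field_simp
  ring

lemma deriv_deriv_sech_sq (x : ℝ) :
    deriv (deriv fun y => (1 / cosh y) ^ 2) x = 4 * (1 / cosh x) ^ 2 - 6 * ((1 / cosh x) ^ 2) ^ 2 := by
  have hsinh : sinh x ^ 2 = cosh x ^ 2 - 1 := by linarith [cosh_sq_sub_sinh_sq x]
  simp only [deriv_sech_sq, mul_div_assoc]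
  rw [deriv_const_mul_field']
  beta_reduce
  rw [(hasDerivAt_sinh_div_cosh_pow_three x).deriv, hsinh]
  field_simp
  ring

/-- The line soliton `u_c(ξ) = c·sech²(√c·ξ)` with `c > 0` satisfies the stationary
KdV equation `-u'' + 4c·u - 6u² = 0` on `ℝ`. -/
theorem line_soliton_stationary_KdV (c : ℝ) (hc : 0 < c)
    (u : ℝ → ℝ) (hu : ∀ ξ, u ξ = c * (1 / Real.cosh (Real.sqrt c * ξ))^2) :
    ∀ ξ : ℝ, -(deriv (deriv u)) ξ + 4 * c * u ξ - 6 * (u ξ)^2 = 0 := by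
  intro ξ
  have hsqrt : Real.sqrt c ^ 2 = c := sq_sqrt hc.le
  rw [funext hu, deriv_deriv_const_mul_comp_mul_left (fun y => (1 / cosh y) ^ 2),
    deriv_deriv_sech_sq, hsqrt]
  ring
end

section
/- For c > 0, the function φ₃(ξ) = 4·sech(√c·ξ) - 5·sech³(√c·ξ) satisfies L_c φ₃ = 3c·φ₃, where L_c = -d²/dξ² + 4c - 12c·sech²(√c·ξ). -/
/-!
Writing `S = sech(√c ξ)`, one has `(sech^n)'' = n² sech^n - n(n+1) sech^(n+2)` (from
`sech' = -sinh·sech²` and `sinh² sech² = 1 - sech²`), and rescaling the variable by `√c`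
multiplies the second derivative by `c`. Hence `φ₃'' = c(4S - 53S³ + 60S⁵)`, and the identity
`L_c φ₃ = 3c φ₃` becomes a polynomial identity in `S`.
-/

open Real

theorem iteratedDeriv_two {𝕜 F : Type*} [NontriviallyNormedField 𝕜] [NormedAddCommGroup F]
    [NormedSpace 𝕜 F] (f : 𝕜 → F) : iteratedDeriv 2 f = deriv (deriv f) := by
  rw [iteratedDeriv_succ, iteratedDeriv_one]

namespace Real

noncomputable def sech (x : ℝ) : ℝ := (cosh x)⁻¹

theorem cosh_mul_sech (x : ℝ) : cosh x * sech x = 1 :=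
  mul_inv_cancel₀ (cosh_pos x).ne'

theorem sinh_sq_mul_sech_sq (x : ℝ) : sinh x ^ 2 * sech x ^ 2 = 1 - sech x ^ 2 := by
  have h := cosh_mul_sech x
  linear_combination (-sech x ^ 2) * cosh_sq_sub_sinh_sq x + (1 + cosh x * sech x) * h

@[fun_prop]
theorem contDiff_sech {n : WithTop ℕ∞} : ContDiff ℝ n sech :=
  contDiff_cosh.inv fun x => (cosh_pos x).ne'

theorem hasDerivAt_sech (x : ℝ) : HasDerivAt sech (-(sinh x * sech x ^ 2)) x :=
  ((hasDerivAt_cosh x).inv (cosh_pos x).ne').congr_deriv (by simp [sech, div_eq_mul_inv])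

theorem hasDerivAt_sech_pow (n : ℕ) (x : ℝ) :
    HasDerivAt (fun y => sech y ^ n) (-(n * sinh x * sech x ^ (n + 1))) x := by
  refine ((hasDerivAt_sech x).fun_pow n).congr_deriv ?_
  rcases n with _ | n
  · simp
  · simp only [Nat.add_sub_cancel]
    ring

theorem iteratedDeriv_two_sech_pow (n : ℕ) (x : ℝ) :
    iteratedDeriv 2 (fun y => sech y ^ n) x
      = n ^ 2 * sech x ^ n - n * (n + 1) * sech x ^ (n + 2) := by
  have hderiv : deriv (fun y => sech y ^ n) = fun y => -(n * sinh y * sech y ^ (n + 1)) :=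
    funext fun y => (hasDerivAt_sech_pow n y).deriv
  have hderiv2 : HasDerivAt (fun y => -(n * sinh y * sech y ^ (n + 1)))
      (n ^ 2 * sech x ^ n - n * (n + 1) * sech x ^ (n + 2)) x := by
    refine (((hasDerivAt_sinh x).const_mul (n : ℝ)).mul
      (hasDerivAt_sech_pow (n + 1) x)).neg.congr_deriv ?_
    push_cast
    linear_combination (-(n : ℝ) * sech x ^ n) * cosh_mul_sech x
      + ((n : ℝ) * (n + 1) * sech x ^ n) * sinh_sq_mul_sech_sq x
  rw [iteratedDeriv_two, hderiv, hderiv2.deriv]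

end Real

/-- For `c > 0`, `φ₃(ξ) = 4·sech(√c·ξ) - 5·sech³(√c·ξ)` satisfies `L_c φ₃ = 3c·φ₃`. -/
theorem eigenfunction_third (c : ℝ) (hc : 0 < c)
    (φ : ℝ → ℝ)
    (hφ : ∀ ξ, φ ξ = 4 * (1 / Real.cosh (Real.sqrt c * ξ))
        - 5 * (1 / Real.cosh (Real.sqrt c * ξ))^3) :
    ∀ ξ : ℝ, -(deriv (deriv φ)) ξ + 4 * c * φ ξ
      - 12 * c * (1 / Real.cosh (Real.sqrt c * ξ))^2 * φ ξ = 3 * c * φ ξ := by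
  intro ξ
  set P : ℝ → ℝ := fun y => 4 * sech y ^ 1 - 5 * sech y ^ 3 with hP
  have hφP : φ = fun ξ => P (√c * ξ) := funext fun ξ => by simp [hφ, P, sech]
  set S := sech (√c * ξ)
  have hφ'' : deriv (deriv φ) ξ = c * (4 * S - 53 * S ^ 3 + 60 * S ^ 5) := by
    rw [← iteratedDeriv_two, hφP, iteratedDeriv_comp_const_mul (by fun_prop), sq_sqrt hc.le, hP]
    beta_reduce
    rw [iteratedDeriv_fun_sub (by fun_prop) (by fun_prop), iteratedDeriv_const_mul _ (by fun_prop),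
      iteratedDeriv_const_mul _ (by fun_prop), iteratedDeriv_two_sech_pow,
      iteratedDeriv_two_sech_pow]
    push_cast
    ring
  have hφS : φ ξ = 4 * S - 5 * S ^ 3 := by simp [hφ, S, sech]
  rw [hφ'', hφS, show 1 / cosh (√c * ξ) = S from one_div _]
  ring
end

section
/- With c* = 1/5, ψ*(ξ) = sech³(√c*·ξ), and L'_{c*} the operator of multiplication by 4 - 12·sech²(√c*·ξ) + 12·√c*·ξ·sech²(√c*·ξ)·tanh(√c*·ξ), the inner product ⟨ψ*, L'_{c*}ψ*⟩_{L²} = ∫_ℝ ψ*(ξ)·(L'_{c*}ψ*)(ξ)dξ equals -16/(3√c*). -/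
/-!
The substitution `x = √c ξ` scales the integral by `1/√c`, so it suffices to show that
`∫ sech⁶ x (4 - 12 sech² x + 12 x sech² x tanh x) dx = -16/3`.
Since `sech² = 1 - tanh² = tanh'`, the first two terms integrate to polynomials in `tanh x`,
and, as `12 x sech⁸ x tanh x = -(3/2) x (sech⁸ x)'`, the last one integrates by parts to
`-(3/2) x sech⁸ x` plus such a polynomial. The resulting primitive is odd and tends to `-8/3`
at `+∞`.
-/

open Real MeasureTheory Filter Topology

namespace Real

lemma tanh_eq_two_mul_sigmoid_sub_one (x : ℝ) : tanh x = 2 * sigmoid (2 * x) - 1 := by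
  rw [tanh_eq, sigmoid_def, show -(2 * x) = -x + -x by ring, exp_add, exp_neg]
  have := exp_pos x
  field_simp
  ring

lemma tendsto_tanh_atTop : Tendsto tanh atTop (𝓝 1) := by
  have h := tendsto_sigmoid_atTop.comp (tendsto_id.const_mul_atTop two_pos)
  convert (h.const_mul 2).sub_const 1 using 2
  · exact tanh_eq_two_mul_sigmoid_sub_one _
  · norm_num

lemma one_sub_tanh_sq (x : ℝ) : 1 - tanh x ^ 2 = (cosh x ^ 2)⁻¹ := by
  rw [tanh_eq_sinh_div_cosh, div_pow, cosh_sq]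
  have := sinh_sq x
  field_simp
  ring

lemma hasDerivAt_tanh (x : ℝ) : HasDerivAt tanh (1 - tanh x ^ 2) x := by
  have h := (hasDerivAt_sinh x).div (hasDerivAt_cosh x) (cosh_pos x).ne'
  rw [show sinh / cosh = tanh from funext fun y ↦ (tanh_eq_sinh_div_cosh y).symm] at h
  refine h.congr_deriv ?_
  rw [one_sub_tanh_sq, ← sq, ← sq, cosh_sq_sub_sinh_sq, one_div]

@[fun_prop]
lemma continuous_tanh : Continuous tanh :=
  continuous_iff_continuousAt.2 fun x ↦ (hasDerivAt_tanh x).continuousAt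

lemma one_add_sq_le_cosh_sq (x : ℝ) : 1 + x ^ 2 ≤ cosh x ^ 2 := by
  have h : x ^ 2 ≤ sinh x ^ 2 :=
    sq_le_sq.2 (by rw [abs_sinh]; exact self_le_sinh_iff.2 (abs_nonneg x))
  rw [cosh_sq]
  linarith

lemma one_sub_tanh_sq_le (x : ℝ) : 1 - tanh x ^ 2 ≤ (1 + x ^ 2)⁻¹ := by
  rw [one_sub_tanh_sq]
  exact inv_anti₀ (by positivity) (one_add_sq_le_cosh_sq x)

lemma abs_mul_one_sub_tanh_sq_le_one (x : ℝ) : |x| * (1 - tanh x ^ 2) ≤ 1 := by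
  calc |x| * (1 - tanh x ^ 2) ≤ |x| * (1 + x ^ 2)⁻¹ :=
        mul_le_mul_of_nonneg_left (one_sub_tanh_sq_le x) (abs_nonneg x)
    _ ≤ 1 := by
        rw [← div_eq_mul_inv, div_le_one (by positivity)]
        nlinarith [sq_abs x, abs_nonneg x]

lemma one_div_cosh_sq (x : ℝ) : (1 / cosh x) ^ 2 = 1 - tanh x ^ 2 := by
  rw [one_sub_tanh_sq, one_div, inv_pow]

end Real

noncomputable def pairingPoly (t : ℝ) : ℝ :=
  4 * (t - 2 / 3 * t ^ 3 + 1 / 5 * t ^ 5) - 21 / 2 * (t - t ^ 3 + 3 / 5 * t ^ 5 - 1 / 7 * t ^ 7)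

lemma hasDerivAt_pairingPoly (t : ℝ) :
    HasDerivAt pairingPoly (4 * (1 - t ^ 2) ^ 2 - 21 / 2 * (1 - t ^ 2) ^ 3) t := by
  have h := (((((hasDerivAt_id t).sub ((hasDerivAt_pow 3 t).const_mul (2 / 3))).add
    ((hasDerivAt_pow 5 t).const_mul (1 / 5))).const_mul 4).sub
    (((((hasDerivAt_id t).sub (hasDerivAt_pow 3 t)).add
      ((hasDerivAt_pow 5 t).const_mul (3 / 5))).sub
        ((hasDerivAt_pow 7 t).const_mul (1 / 7))).const_mul (21 / 2)))
  refine h.congr_deriv ?_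
  push_cast
  ring

lemma pairingPoly_neg (t : ℝ) : pairingPoly (-t) = -pairingPoly t := by
  simp only [pairingPoly]
  ring

/-- `ψ · L'ψ` at `c = 1`, with `sech²` written as `1 - tanh²`. -/
noncomputable def pairingDensity (x : ℝ) : ℝ :=
  (1 - tanh x ^ 2) ^ 3 * (4 - 12 * (1 - tanh x ^ 2) + 12 * x * (1 - tanh x ^ 2) * tanh x)

noncomputable def pairingPrimitive (x : ℝ) : ℝ :=
  pairingPoly (tanh x) - 3 / 2 * x * (1 - tanh x ^ 2) ^ 4

lemma hasDerivAt_pairingPrimitive (x : ℝ) :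
    HasDerivAt pairingPrimitive (pairingDensity x) x := by
  have ht := hasDerivAt_tanh x
  have h := ((hasDerivAt_pairingPoly (tanh x)).comp x ht).sub
    (((hasDerivAt_id x).const_mul (3 / 2)).mul (((hasDerivAt_const x 1).sub (ht.pow 2)).pow 4))
  refine h.congr_deriv ?_
  simp only [pairingDensity, id, Pi.sub_apply, Pi.pow_apply]
  push_cast
  ring

lemma pairingPrimitive_neg (x : ℝ) : pairingPrimitive (-x) = -pairingPrimitive x := by
  simp only [pairingPrimitive, tanh_neg, pairingPoly_neg]
  ring

lemma tendsto_mul_one_sub_tanh_sq_pow_atTop :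
    Tendsto (fun x ↦ x * (1 - tanh x ^ 2) ^ 4) atTop (𝓝 0) := by
  have hu : Tendsto (fun x ↦ (1 - tanh x ^ 2) ^ 3) atTop (𝓝 0) := by
    simpa using ((tendsto_tanh_atTop.pow 2).const_sub 1).pow 3
  refine squeeze_zero_norm (fun x ↦ ?_) hu
  have h0 : 0 ≤ 1 - tanh x ^ 2 := sub_nonneg.2 (tanh_sq_lt_one x).le
  rw [norm_mul, Real.norm_eq_abs, norm_of_nonneg (by positivity), pow_succ, ← mul_assoc,
    mul_comm _ ((1 - tanh x ^ 2) ^ 3), mul_assoc]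
  exact mul_le_of_le_one_right (by positivity) (abs_mul_one_sub_tanh_sq_le_one x)

lemma tendsto_pairingPrimitive_atTop : Tendsto pairingPrimitive atTop (𝓝 (-8 / 3)) := by
  have hP : Tendsto (fun x ↦ pairingPoly (tanh x)) atTop (𝓝 (pairingPoly 1)) :=
    ((by unfold pairingPoly; fun_prop : Continuous pairingPoly).tendsto 1).comp tendsto_tanh_atTop
  convert hP.sub (tendsto_mul_one_sub_tanh_sq_pow_atTop.const_mul (3 / 2)) using 1
  · ext x
    simp only [pairingPrimitive]
    ring
  · norm_num [pairingPoly]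

lemma tendsto_pairingPrimitive_atBot : Tendsto pairingPrimitive atBot (𝓝 (8 / 3)) := by
  have h := (tendsto_pairingPrimitive_atTop.comp tendsto_neg_atBot_atTop).neg
  simpa [Function.comp_def, pairingPrimitive_neg, neg_div] using h

lemma abs_pairingDensity_le (x : ℝ) : |pairingDensity x| ≤ 28 * (1 + x ^ 2)⁻¹ := by
  have hu0 : 0 ≤ 1 - tanh x ^ 2 := sub_nonneg.2 (tanh_sq_lt_one x).le
  have hu1 : 1 - tanh x ^ 2 ≤ 1 := by nlinarith [sq_nonneg (tanh x)]
  set u := 1 - tanh x ^ 2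
  have hxut : |x * u * tanh x| ≤ 1 := by
    rw [abs_mul, abs_mul, abs_of_nonneg hu0]
    exact mul_le_one₀ (abs_mul_one_sub_tanh_sq_le_one x) (abs_nonneg _) (abs_tanh_lt_one x).le
  have hfactor : |4 - 12 * u + 12 * x * u * tanh x| ≤ 28 := by
    rw [abs_le] at hxut ⊢
    constructor <;> nlinarith
  calc |pairingDensity x| = u ^ 3 * |4 - 12 * u + 12 * x * u * tanh x| := by
        rw [pairingDensity, abs_mul, abs_of_nonneg (pow_nonneg hu0 3)]
    _ ≤ u * 28 :=
        mul_le_mul (pow_le_of_le_one hu0 hu1 (by norm_num)) hfactor (abs_nonneg _) hu0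
    _ ≤ 28 * (1 + x ^ 2)⁻¹ := by rw [mul_comm]; gcongr; exact one_sub_tanh_sq_le x

lemma integrable_pairingDensity : Integrable pairingDensity := by
  refine (integrable_inv_one_add_sq.const_mul 28).mono' ?_ (ae_of_all _ abs_pairingDensity_le)
  unfold pairingDensity
  exact (by fun_prop : Continuous _).aestronglyMeasurable

lemma integral_pairingDensity : ∫ x, pairingDensity x = -16 / 3 := by
  rw [integral_of_hasDerivAt_of_tendsto hasDerivAt_pairingPrimitive integrable_pairingDensity
    tendsto_pairingPrimitive_atBot tendsto_pairingPrimitive_atTop]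
  norm_num

theorem integral_psi_mul_Lprime_psi {c : ℝ} (hc : 0 < c) :
    ∫ ξ : ℝ, (1 / cosh (√c * ξ)) ^ 3 * ((4 - 12 * (1 / cosh (√c * ξ)) ^ 2
        + 12 * √c * ξ * (1 / cosh (√c * ξ)) ^ 2 * tanh (√c * ξ)) * (1 / cosh (√c * ξ)) ^ 3)
      = -16 / (3 * √c) := by
  have hsqrt : 0 < √c := sqrt_pos.2 hc
  calc _ = ∫ ξ, pairingDensity (√c * ξ) := by
        congr 1 with ξ
        rw [pairingDensity, ← one_div_cosh_sq]
        ring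
    _ = (√c)⁻¹ * (-16 / 3) := by
        rw [Measure.integral_comp_mul_left pairingDensity, integral_pairingDensity,
          abs_of_pos (inv_pos.2 hsqrt), smul_eq_mul]
    _ = -16 / (3 * √c) := by field_simp

/-- With `c* = 1/5` and `ψ*(ξ) = sech³(√c*·ξ)`,
`⟨ψ*, L'_{c*}ψ*⟩ = -16/(3√c*)`, where `L'_{c*}` is multiplication by
`4 - 12·sech²(√c*·ξ) + 12√c*·ξ·sech²(√c*·ξ)·tanh(√c*·ξ)`. -/
theorem inner_product_psi_Lprime_psi :
    let c : ℝ := 1/5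
    let ψ : ℝ → ℝ := fun ξ => (1 / Real.cosh (Real.sqrt c * ξ))^3
    (∫ ξ : ℝ, ψ ξ * ((4 - 12 * (1 / Real.cosh (Real.sqrt c * ξ))^2
        + 12 * Real.sqrt c * ξ * (1 / Real.cosh (Real.sqrt c * ξ))^2
          * Real.tanh (Real.sqrt c * ξ)) * ψ ξ))
      = -16 / (3 * Real.sqrt c) :=
  integral_psi_mul_Lprime_psi (by norm_num)
end

section
/- With c* = 1/5 and ψ*(ξ) = sech³(√c*·ξ), the function w₀(ξ) = -15·sech²(√c*·ξ) + (15/2)·sech⁴(√c*·ξ) satisfies the linear inhomogeneous equation L_{c*} w₀ = 12·ψ*², where L_{c*} = -d²/dξ² + 4c* - 12c*·sech²(√c*·ξ). -/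
/-!
Writing `s = sech (a ξ)`, one has `(sⁿ)'' = a² n (n sⁿ - (n + 1) sⁿ⁺²)`, so with `a² = c* = 1/5` every
term of `L_{c*} w₀` is a polynomial in `s`; the `s²` and `s⁴` terms cancel and `12 s⁶ = 12 ψ*²` remains.
-/

open Real

noncomputable def sechPow (a : ℝ) (n : ℕ) (x : ℝ) : ℝ := (cosh (a * x))⁻¹ ^ n

lemma hasDerivAt_sechPow (a : ℝ) (n : ℕ) (x : ℝ) :
    HasDerivAt (sechPow a n) (-(n * a) * sinh (a * x) * sechPow a (n + 1) x) x := by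
  have hcosh : HasDerivAt (fun y => cosh (a * y)) (sinh (a * x) * a) x :=
    ((hasDerivAt_id' x).const_mul a).cosh.congr_deriv (by ring)
  have hinv : HasDerivAt (fun y => (cosh (a * y))⁻¹) (-(sinh (a * x) * a) / cosh (a * x) ^ 2) x :=
    hcosh.inv (cosh_pos _).ne'
  refine (hinv.pow n).congr_deriv ?_
  have hc := (cosh_pos (a * x)).ne'
  cases n with
  | zero => simp
  | succ m =>
    simp only [sechPow, Nat.add_sub_cancel, inv_pow]
    field_simp
    ring

lemma deriv_sechPow (a : ℝ) (n : ℕ) :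
    deriv (sechPow a n) = fun x => -(n * a) * sinh (a * x) * sechPow a (n + 1) x :=
  funext fun x => (hasDerivAt_sechPow a n x).deriv

lemma hasDerivAt_deriv_sechPow (a : ℝ) (n : ℕ) (x : ℝ) :
    HasDerivAt (deriv (sechPow a n))
      (a ^ 2 * n * (n * sechPow a n x - (n + 1) * sechPow a (n + 2) x)) x := by
  have hsinh : HasDerivAt (fun y => sinh (a * y)) (cosh (a * x) * a) x :=
    ((hasDerivAt_id' x).const_mul a).sinh.congr_deriv (by ring)
  rw [deriv_sechPow]
  refine ((hsinh.const_mul (-(n * a))).mul (hasDerivAt_sechPow a (n + 1) x)).congr_deriv ?_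
  have hc := (cosh_pos (a * x)).ne'
  have hsinh_sq : sinh (a * x) ^ 2 = cosh (a * x) ^ 2 - 1 := by
    linarith [cosh_sq (a * x)]
  simp only [sechPow, inv_pow, mul_assoc]
  push_cast
  field_simp
  rw [hsinh_sq]
  ring

/-- With `c* = 1/5`, `w₀(ξ) = -15·sech²(√c*·ξ) + (15/2)·sech⁴(√c*·ξ)` satisfies
`L_{c*} w₀ = 12 ψ*²` where `ψ*(ξ) = sech³(√c*·ξ)`. -/
theorem w0_equation
    (w₀ : ℝ → ℝ)
    (hw : ∀ ξ, w₀ ξ = -15 * (1 / Real.cosh (Real.sqrt (1/5) * ξ))^2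
        + (15/2) * (1 / Real.cosh (Real.sqrt (1/5) * ξ))^4) :
    ∀ ξ : ℝ, -(deriv (deriv w₀)) ξ + 4 * (1/5) * w₀ ξ
        - 12 * (1/5) * (1 / Real.cosh (Real.sqrt (1/5) * ξ))^2 * w₀ ξ
      = 12 * ((1 / Real.cosh (Real.sqrt (1/5) * ξ))^3)^2 := by
  intro ξ
  set a := √(1 / 5)
  have hw' : w₀ = fun x => -15 * sechPow a 2 x + 15 / 2 * sechPow a 4 x := by
    funext x
    simp only [hw x, sechPow, one_div]
  have hD : deriv w₀ = fun x => -15 * deriv (sechPow a 2) x + 15 / 2 * deriv (sechPow a 4) x := by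
    rw [hw']
    funext x
    rw [(((hasDerivAt_sechPow a 2 x).const_mul _).fun_add
      ((hasDerivAt_sechPow a 4 x).const_mul _)).deriv, deriv_sechPow, deriv_sechPow]
  have hDD : HasDerivAt (deriv w₀) (-15 * (a ^ 2 * 2 * (2 * sechPow a 2 ξ - 3 * sechPow a 4 ξ))
      + 15 / 2 * (a ^ 2 * 4 * (4 * sechPow a 4 ξ - 5 * sechPow a 6 ξ))) ξ := by
    rw [hD]
    refine (((hasDerivAt_deriv_sechPow a 2 ξ).const_mul (-15 : ℝ)).fun_add
      ((hasDerivAt_deriv_sechPow a 4 ξ).const_mul (15 / 2 : ℝ))).congr_deriv ?_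
    norm_num
  have ha : a ^ 2 = 1 / 5 := sq_sqrt (by norm_num)
  rw [hDD.deriv, hw ξ, ha]
  simp only [sechPow, one_div]
  ring
end
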